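/- (Strict monotonicity of the optimal threshold in the favorability of the environment.) The function α̂₀ : ℝ → ℝ defined by α̂₀(ρ) = Φ(ρ)·(1 − ρ·Φ(−ρ)/φ(ρ)) is strictly decreasing on ℝ: for all ρ₁ < ρ₂ one has α̂₀(ρ₁) > α̂₀(ρ₂). In particular, the estimated optimal acceptance threshold increases when the environment becomes less favorable and decreases when it becomes more favorable. -/

import Mathlib

open MeasureTheory ProbabilityTheory

/-- The standard normal density φ(t) = (2π)^{-1/2} e^{-t²/2}. -/
noncomputable def stdNormalPDF (t : ℝ) : ℝ :=
  (Real.sqrt (2 * Real.pi))⁻¹ * Real.exp (-t ^ 2 / 2)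

/-- The standard normal distribution function Φ(x) = ∫_{-∞}^x φ(t) dt. -/
noncomputable def stdNormalCDF (x : ℝ) : ℝ :=
  ∫ t in Set.Iic x, stdNormalPDF t

/-- The estimate α̂₀ of the optimal acceptance threshold as a function of the
adjusted mean ρ of the environment. -/
noncomputable def optThreshold (ρ : ℝ) : ℝ :=
  stdNormalCDF ρ * (1 - ρ * stdNormalCDF (-ρ) / stdNormalPDF ρ)

/-!
Differentiating, `α̂₀' = -G / φ` with
`G = (1 + ρ²) Φ(ρ) Φ(-ρ) - ρ φ(ρ) (Φ(ρ) - Φ(-ρ)) - φ(ρ)²`, so it suffices that `G > 0`.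
`G` is even, tends to `0` at `+∞` and has derivative `-2K`, so it is enough that `K > 0` on
`(0, ∞)`. This follows from a cascade of the same argument: a function that vanishes at `0` and at
`+∞` and whose derivative changes sign at most once on `(0, ∞)`, from `+` to `-`, is positive
there. For `K` the sign change comes from the monotonicity of `ψ = Φ(ρ) Φ(-ρ) / φ(ρ)²`, whose
derivative is `M / φ²`; for `M` it comes from `M'' = φ H`, where `H` is strictly convex on
`[0, ∞)` and vanishes at `0`. The limits at `+∞` rest on Gordon's bound `x Φ(-x) < φ(x)`.
-/

open Real Set Filter Topology

section Crossing

variable {g g' : ℝ → ℝ}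

lemma StrictMonoOn.lt_of_tendsto_atTop {a L x : ℝ} (hg : StrictMonoOn g (Ici a))
    (hlim : Tendsto g atTop (𝓝 L)) (hx : a ≤ x) : g x < L := by
  have hx₁ : x + 1 ∈ Ici a := by simp only [mem_Ici]; linarith
  refine (hg hx hx₁ (lt_add_one x)).trans_le (ge_of_tendsto hlim ?_)
  filter_upwards [eventually_ge_atTop (x + 1)] with y hy
  exact hg.monotoneOn hx₁ (hx₁.trans hy) hy

lemma StrictAntiOn.lt_of_tendsto_atTop {a L x : ℝ} (hg : StrictAntiOn g (Ici a))
    (hlim : Tendsto g atTop (𝓝 L)) (hx : a ≤ x) : L < g x :=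
  neg_lt_neg_iff.mp (hg.neg.lt_of_tendsto_atTop hlim.neg hx)

lemma strictMonoOn_of_hasDerivAt_pos {s : Set ℝ} (hs : Convex ℝ s)
    (hg : ∀ x, HasDerivAt g (g' x) x) (hpos : ∀ x ∈ interior s, 0 < g' x) : StrictMonoOn g s :=
  strictMonoOn_of_hasDerivWithinAt_pos hs (fun x _ => (hg x).continuousAt.continuousWithinAt)
    (fun x _ => (hg x).hasDerivWithinAt) hpos

lemma strictAntiOn_of_hasDerivAt_neg {s : Set ℝ} (hs : Convex ℝ s)
    (hg : ∀ x, HasDerivAt g (g' x) x) (hneg : ∀ x ∈ interior s, g' x < 0) : StrictAntiOn g s :=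
  strictAntiOn_of_hasDerivWithinAt_neg hs (fun x _ => (hg x).continuousAt.continuousWithinAt)
    (fun x _ => (hg x).hasDerivWithinAt) hneg

/-- On `(0, ∞)`, `g` changes sign at most once, and then from positive to negative. -/
def SingleCrossingDown (g : ℝ → ℝ) : Prop :=
  ∀ ⦃a b : ℝ⦄, 0 < a → a < b → g a ≤ 0 → g b < 0

/-- On `(0, ∞)`, `g` changes sign at most once, and then from negative to positive. -/
def SingleCrossingUp (g : ℝ → ℝ) : Prop :=
  ∀ ⦃a b : ℝ⦄, 0 < a → a < b → 0 ≤ g a → 0 < g b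

lemma SingleCrossingDown.pos_mul {c : ℝ → ℝ} (hg : SingleCrossingDown g) (hc : ∀ x, 0 < c x) :
    SingleCrossingDown fun x => c x * g x := fun a b ha hab hga =>
  mul_neg_of_pos_of_neg (hc b) (hg ha hab (nonpos_of_mul_nonpos_right hga (hc a)))

lemma SingleCrossingUp.pos_mul {c : ℝ → ℝ} (hg : SingleCrossingUp g) (hc : ∀ x, 0 < c x) :
    SingleCrossingUp fun x => c x * g x := fun a b ha hab hga =>
  mul_pos (hc b) (hg ha hab ((mul_nonneg_iff_of_pos_left (hc a)).mp hga))

lemma StrictAntiOn.singleCrossingDown (hg : StrictAntiOn g (Ioi 0)) : SingleCrossingDown g :=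
  fun _ _ ha hab hga => (hg ha (ha.trans hab) hab).trans_le hga

lemma StrictConvexOn.singleCrossingUp (hg : StrictConvexOn ℝ (Ici 0) g) (h0 : g 0 = 0) :
    SingleCrossingUp g := by
  intro a b ha hab hga
  have hb : 0 < b := ha.trans hab
  -- `a` is the convex combination `(1 - a / b) • 0 + (a / b) • b`
  have key := hg.2 (mem_Ici.mpr le_rfl) hb.le hb.ne (sub_pos.mpr ((div_lt_one hb).mpr hab))
    (div_pos ha hb) (sub_add_cancel 1 (a / b))
  simp only [smul_eq_mul, mul_zero, zero_add, h0, div_mul_cancel₀ a hb.ne'] at key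
  by_contra! hgb
  nlinarith [div_pos ha hb]

lemma SingleCrossingUp.singleCrossingDown_of_hasDerivAt (hg : ∀ x, HasDerivAt g (g' x) x)
    (hg' : SingleCrossingUp g') (hlim : Tendsto g atTop (𝓝 0)) : SingleCrossingDown g := by
  intro a b ha hab hga
  by_cases h : ∃ s, 0 < s ∧ s < b ∧ 0 ≤ g' s
  · obtain ⟨s, hs, hsb, hgs⟩ := h
    refine (strictMonoOn_of_hasDerivAt_pos (convex_Ici s) hg fun x hx => ?_).lt_of_tendsto_atTop
      hlim hsb.le
    rw [interior_Ici] at hx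
    exact hg' hs hx hgs
  · push Not at h
    have hanti := strictAntiOn_of_hasDerivAt_neg (convex_Icc a b) hg fun x hx => by
      rw [interior_Icc] at hx
      exact h x (ha.trans hx.1) hx.2
    exact (hanti (left_mem_Icc.mpr hab.le) (right_mem_Icc.mpr hab.le) hab).trans_le hga

lemma SingleCrossingDown.pos_of_hasDerivAt (hg : ∀ x, HasDerivAt g (g' x) x)
    (hg' : SingleCrossingDown g') (h0 : g 0 = 0) (hlim : Tendsto g atTop (𝓝 0)) {x : ℝ}
    (hx : 0 < x) : 0 < g x := by
  by_cases h : ∃ t, 0 < t ∧ t < x ∧ g' t ≤ 0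
  · obtain ⟨t, ht, htx, hgt⟩ := h
    refine (strictAntiOn_of_hasDerivAt_neg (convex_Ici t) hg fun y hy => ?_).lt_of_tendsto_atTop
      hlim htx.le
    rw [interior_Ici] at hy
    exact hg' ht hy hgt
  · push Not at h
    have hmono := strictMonoOn_of_hasDerivAt_pos (convex_Icc 0 x) hg fun y hy => by
      rw [interior_Icc] at hy
      exact h y hy.1 hy.2
    exact h0 ▸ hmono (left_mem_Icc.mpr hx.le) (right_mem_Icc.mpr hx.le) hx

end Crossing

local notation "φ" => stdNormalPDF
local notation "Φ" => stdNormalCDF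

lemma stdNormalPDF_eq_gaussianPDFReal : stdNormalPDF = gaussianPDFReal 0 1 := by
  ext x
  simp [stdNormalPDF, gaussianPDFReal]

lemma stdNormalPDF_pos (x : ℝ) : 0 < φ x := by
  unfold stdNormalPDF; positivity

lemma stdNormalPDF_neg (x : ℝ) : φ (-x) = φ x := by
  simp [stdNormalPDF]

lemma hasDerivAt_stdNormalPDF (x : ℝ) : HasDerivAt stdNormalPDF (-x * φ x) x := by
  have h : HasDerivAt (fun t : ℝ => -t ^ 2 / 2) (-x) x := by
    simpa using ((hasDerivAt_pow 2 x).neg.div_const 2).congr_deriv (by ring : _ = -x)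
  exact (h.exp.const_mul _).congr_deriv (by rw [stdNormalPDF]; ring)

lemma stdNormalCDF_eq_cdf : stdNormalCDF = cdf (gaussianReal 0 1) := by
  ext x
  rw [cdf_eq_real, measureReal_def, gaussianReal_apply_eq_integral _ one_ne_zero,
    ENNReal.toReal_ofReal (integral_nonneg fun _ => gaussianPDFReal_nonneg _ _ _),
    stdNormalCDF, stdNormalPDF_eq_gaussianPDFReal]

lemma integrable_stdNormalPDF : Integrable stdNormalPDF := by
  rw [stdNormalPDF_eq_gaussianPDFReal]; exact integrable_gaussianPDFReal 0 1

lemma hasDerivAt_stdNormalCDF (x : ℝ) : HasDerivAt stdNormalCDF (φ x) x := by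
  have hcont : Continuous stdNormalPDF := by unfold stdNormalPDF; fun_prop
  have hΦ : stdNormalCDF = fun y => Φ 0 + ∫ t in (0 : ℝ)..y, φ t := by
    ext y
    rw [← intervalIntegral.integral_Iic_sub_Iic integrable_stdNormalPDF.integrableOn
      integrable_stdNormalPDF.integrableOn, stdNormalCDF, stdNormalCDF]
    ring
  rw [hΦ]
  exact (intervalIntegral.integral_hasDerivAt_right integrable_stdNormalPDF.intervalIntegrable
    (hcont.stronglyMeasurableAtFilter _ _) hcont.continuousAt).const_add _

lemma strictMono_stdNormalCDF : StrictMono stdNormalCDF :=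
  strictMono_of_hasDerivAt_pos hasDerivAt_stdNormalCDF stdNormalPDF_pos

lemma stdNormalCDF_nonneg (x : ℝ) : 0 ≤ Φ x := stdNormalCDF_eq_cdf ▸ cdf_nonneg _ x

lemma tendsto_stdNormalCDF_atTop : Tendsto stdNormalCDF atTop (𝓝 1) :=
  stdNormalCDF_eq_cdf ▸ tendsto_cdf_atTop _

lemma tendsto_stdNormalCDF_neg_atTop : Tendsto (fun x => Φ (-x)) atTop (𝓝 0) :=
  (stdNormalCDF_eq_cdf ▸ tendsto_cdf_atBot _).comp tendsto_neg_atTop_atBot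

lemma tendsto_pow_mul_stdNormalPDF_atTop (n : ℕ) :
    Tendsto (fun x => x ^ n * φ x) atTop (𝓝 0) := by
  have := ((tendsto_rpow_abs_mul_exp_neg_mul_sq_cocompact (a := 1 / 2) (by norm_num) n).mono_left
    atTop_le_cocompact).const_mul (√(2 * π))⁻¹
  rw [mul_zero] at this
  refine this.congr' ?_
  filter_upwards [eventually_ge_atTop 0] with x hx
  rw [abs_of_nonneg hx, rpow_natCast, stdNormalPDF]
  ring_nf

lemma tendsto_stdNormalPDF_atTop : Tendsto stdNormalPDF atTop (𝓝 0) := by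
  simpa using tendsto_pow_mul_stdNormalPDF_atTop 0

lemma hasDerivAt_stdNormalCDF_neg (x : ℝ) : HasDerivAt (fun y => Φ (-y)) (-φ x) x := by
  have h := (hasDerivAt_stdNormalCDF (-x)).comp x (hasDerivAt_neg x)
  rw [stdNormalPDF_neg, mul_neg_one] at h
  exact h

lemma mul_stdNormalCDF_neg_lt {x : ℝ} (hx : 0 < x) : x * Φ (-x) < φ x := by
  -- `q` increases to its limit `0` at `+∞`, so it is negative
  set q : ℝ → ℝ := fun t => Φ (-t) - φ t / t
  have hq : ∀ t, 0 < t → HasDerivAt q (φ t / t ^ 2) t := fun t ht =>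
    ((hasDerivAt_stdNormalCDF_neg t).sub ((hasDerivAt_stdNormalPDF t).div (hasDerivAt_id' t)
      ht.ne')).congr_deriv (by field_simp; ring)
  have hpos : ∀ t ∈ Ici x, 0 < t := fun t ht => hx.trans_le ht
  have hmono : StrictMonoOn q (Ici x) := strictMonoOn_of_hasDerivWithinAt_pos (convex_Ici x)
    (fun t ht => (hq t (hpos t ht)).continuousAt.continuousWithinAt)
    (fun t ht => (hq t (hpos t (interior_subset ht))).hasDerivWithinAt)
    (fun t ht => div_pos (stdNormalPDF_pos t) (pow_pos (hpos t (interior_subset ht)) 2))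
  have hlim : Tendsto q atTop (𝓝 0) := by
    simpa using tendsto_stdNormalCDF_neg_atTop.sub
      (Tendsto.div_atTop tendsto_stdNormalPDF_atTop tendsto_id)
  have hqx := hmono.lt_of_tendsto_atTop hlim le_rfl
  rw [sub_neg, lt_div_iff₀ hx] at hqx
  linarith

lemma tendsto_pow_succ_mul_stdNormalCDF_neg_atTop (n : ℕ) :
    Tendsto (fun x => x ^ (n + 1) * Φ (-x)) atTop (𝓝 0) := by
  refine tendsto_of_tendsto_of_tendsto_of_le_of_le' tendsto_const_nhds
    (tendsto_pow_mul_stdNormalPDF_atTop n) ?_ ?_ <;>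
    filter_upwards [eventually_gt_atTop 0] with x hx
  · exact mul_nonneg (by positivity) (stdNormalCDF_nonneg _)
  · rw [pow_succ, mul_assoc]
    exact mul_le_mul_of_nonneg_left (mul_stdNormalCDF_neg_lt hx).le (by positivity)

namespace OptThreshold

noncomputable def D (x : ℝ) : ℝ := Φ x - Φ (-x)
noncomputable def G (x : ℝ) : ℝ := (1 + x ^ 2) * Φ x * Φ (-x) - x * φ x * D x - φ x ^ 2
noncomputable def K (x : ℝ) : ℝ := φ x * D x - x * Φ x * Φ (-x)
noncomputable def M (x : ℝ) : ℝ := 2 * x * Φ x * Φ (-x) - φ x * D x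
noncomputable def M' (x : ℝ) : ℝ := 2 * Φ x * Φ (-x) - x * φ x * D x - 2 * φ x ^ 2
noncomputable def H (x : ℝ) : ℝ := (x ^ 2 - 3) * D x + 2 * x * φ x
noncomputable def ψ (x : ℝ) : ℝ := Φ x * Φ (-x) / φ x ^ 2

lemma D_zero : D 0 = 0 := by simp [D]

lemma D_pos {x : ℝ} (hx : 0 < x) : 0 < D x :=
  sub_pos.mpr (strictMono_stdNormalCDF (neg_lt_self hx))

lemma tendsto_D_atTop : Tendsto D atTop (𝓝 1) :=
  sub_zero (1 : ℝ) ▸ tendsto_stdNormalCDF_atTop.sub tendsto_stdNormalCDF_neg_atTop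

lemma hasDerivAt_D (x : ℝ) : HasDerivAt D (2 * φ x) x :=
  ((hasDerivAt_stdNormalCDF x).sub (hasDerivAt_stdNormalCDF_neg x)).congr_deriv (by ring)

lemma hasDerivAt_G (x : ℝ) : HasDerivAt G (-2 * K x) x := by
  have := ((((hasDerivAt_pow 2 x).const_add 1).mul (hasDerivAt_stdNormalCDF x)).mul
    (hasDerivAt_stdNormalCDF_neg x)).sub (((hasDerivAt_id' x).mul
    (hasDerivAt_stdNormalPDF x)).mul (hasDerivAt_D x)) |>.sub ((hasDerivAt_stdNormalPDF x).pow 2)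
  exact this.congr_deriv (by simp only [K, D, Pi.mul_apply]; ring)

lemma hasDerivAt_K (x : ℝ) : HasDerivAt K (φ x ^ 2 * (2 - ψ x)) x := by
  have := ((hasDerivAt_stdNormalPDF x).mul (hasDerivAt_D x)).sub
    (((hasDerivAt_id' x).mul (hasDerivAt_stdNormalCDF x)).mul (hasDerivAt_stdNormalCDF_neg x))
  have hφ := (stdNormalPDF_pos x).ne'
  exact this.congr_deriv (by simp only [ψ, D, Pi.mul_apply]; field_simp; ring)

lemma hasDerivAt_M (x : ℝ) : HasDerivAt M (M' x) x := by
  have := ((((hasDerivAt_id' x).const_mul 2).mul (hasDerivAt_stdNormalCDF x)).mul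
    (hasDerivAt_stdNormalCDF_neg x)).sub ((hasDerivAt_stdNormalPDF x).mul (hasDerivAt_D x))
  exact this.congr_deriv (by simp only [M', D, Pi.mul_apply]; ring)

lemma hasDerivAt_M' (x : ℝ) : HasDerivAt M' (φ x * H x) x := by
  have := ((((hasDerivAt_stdNormalCDF x).const_mul 2).mul (hasDerivAt_stdNormalCDF_neg x)).sub
    (((hasDerivAt_id' x).mul (hasDerivAt_stdNormalPDF x)).mul (hasDerivAt_D x))).sub
    (((hasDerivAt_stdNormalPDF x).pow 2).const_mul 2)
  exact this.congr_deriv (by simp only [H, D, Pi.mul_apply]; ring)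

lemma hasDerivAt_H (x : ℝ) : HasDerivAt H (2 * x * D x - 4 * φ x) x := by
  have := (((hasDerivAt_pow 2 x).sub_const 3).mul (hasDerivAt_D x)).add
    (((hasDerivAt_id' x).const_mul 2).mul (hasDerivAt_stdNormalPDF x))
  exact this.congr_deriv (by simp only [D]; ring)

lemma hasDerivAt_deriv_H (x : ℝ) :
    HasDerivAt (fun y => 2 * y * D y - 4 * φ y) (2 * D x + 8 * x * φ x) x :=
  ((((hasDerivAt_id' x).const_mul 2).mul (hasDerivAt_D x)).sub
    ((hasDerivAt_stdNormalPDF x).const_mul 4)).congr_deriv (by ring)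

lemma hasDerivAt_ψ (x : ℝ) : HasDerivAt ψ (M x / φ x ^ 2) x := by
  have hφ := (stdNormalPDF_pos x).ne'
  have := ((hasDerivAt_stdNormalCDF x).mul (hasDerivAt_stdNormalCDF_neg x)).div
    ((hasDerivAt_stdNormalPDF x).pow 2) (pow_ne_zero 2 hφ)
  exact this.congr_deriv (by simp only [M, D, Pi.mul_apply, Pi.pow_apply]; field_simp; ring)

lemma hasDerivAt_optThreshold (x : ℝ) : HasDerivAt optThreshold (-G x / φ x) x := by
  have hφ := (stdNormalPDF_pos x).ne'
  have := (hasDerivAt_stdNormalCDF x).mul ((((hasDerivAt_id' x).mul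
    (hasDerivAt_stdNormalCDF_neg x)).div (hasDerivAt_stdNormalPDF x) hφ).const_sub 1)
  exact this.congr_deriv (by simp only [G, D, Pi.mul_apply, Pi.div_apply]; field_simp; ring)

lemma tendsto_G_atTop : Tendsto G atTop (𝓝 0) := by
  have := (tendsto_stdNormalCDF_atTop.mul (tendsto_stdNormalCDF_neg_atTop.add
    (tendsto_pow_succ_mul_stdNormalCDF_neg_atTop 1))).sub
    ((tendsto_pow_mul_stdNormalPDF_atTop 1).mul tendsto_D_atTop) |>.sub
    (tendsto_stdNormalPDF_atTop.pow 2)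
  simpa using this.congr fun x => by simp only [G]; ring

lemma tendsto_K_atTop : Tendsto K atTop (𝓝 0) := by
  have := (tendsto_stdNormalPDF_atTop.mul tendsto_D_atTop).sub
    ((tendsto_pow_succ_mul_stdNormalCDF_neg_atTop 0).mul tendsto_stdNormalCDF_atTop)
  simpa using this.congr fun x => by simp only [K]; ring

lemma tendsto_M_atTop : Tendsto M atTop (𝓝 0) := by
  have := (((tendsto_pow_succ_mul_stdNormalCDF_neg_atTop 0).mul
    tendsto_stdNormalCDF_atTop).const_mul 2).sub (tendsto_stdNormalPDF_atTop.mul tendsto_D_atTop)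
  simpa using this.congr fun x => by simp only [M]; ring

lemma tendsto_M'_atTop : Tendsto M' atTop (𝓝 0) := by
  have := ((tendsto_stdNormalCDF_atTop.mul tendsto_stdNormalCDF_neg_atTop).const_mul 2).sub
    ((tendsto_pow_mul_stdNormalPDF_atTop 1).mul tendsto_D_atTop) |>.sub
    ((tendsto_stdNormalPDF_atTop.pow 2).const_mul 2)
  simpa using this.congr fun x => by simp only [M']; ring

lemma H_singleCrossingUp : SingleCrossingUp H := by
  refine StrictConvexOn.singleCrossingUp ?_ (by simp [H, D_zero])
  have hderiv : deriv H = fun y => 2 * y * D y - 4 * φ y := funext fun y => (hasDerivAt_H y).deriv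
  refine StrictMonoOn.strictConvexOn_of_deriv (convex_Ici 0)
    (fun y _ => (hasDerivAt_H y).continuousAt.continuousWithinAt) ?_
  rw [hderiv, interior_Ici]
  refine strictMonoOn_of_hasDerivAt_pos (convex_Ioi 0) hasDerivAt_deriv_H fun y hy => ?_
  rw [interior_Ioi] at hy
  linarith [D_pos hy, mul_pos hy (stdNormalPDF_pos y)]

lemma M'_singleCrossingDown : SingleCrossingDown M' :=
  (H_singleCrossingUp.pos_mul stdNormalPDF_pos).singleCrossingDown_of_hasDerivAt hasDerivAt_M'
    tendsto_M'_atTop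

lemma M_pos {x : ℝ} (hx : 0 < x) : 0 < M x :=
  M'_singleCrossingDown.pos_of_hasDerivAt hasDerivAt_M (by simp [M, D_zero]) tendsto_M_atTop hx

lemma ψ_strictMonoOn : StrictMonoOn ψ (Ioi 0) :=
  strictMonoOn_of_hasDerivAt_pos (convex_Ioi 0) hasDerivAt_ψ fun x hx => by
    rw [interior_Ioi] at hx
    exact div_pos (M_pos hx) (pow_pos (stdNormalPDF_pos x) 2)

lemma K_pos {x : ℝ} (hx : 0 < x) : 0 < K x := by
  have hcross : SingleCrossingDown fun x => 2 - ψ x :=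
    StrictAntiOn.singleCrossingDown fun _ ha _ hb hab =>
      sub_lt_sub_left (ψ_strictMonoOn ha hb hab) 2
  exact (hcross.pos_mul fun x => pow_pos (stdNormalPDF_pos x) 2).pos_of_hasDerivAt hasDerivAt_K
    (by simp [K, D_zero]) tendsto_K_atTop hx

lemma G_pos_of_nonneg {x : ℝ} (hx : 0 ≤ x) : 0 < G x := by
  refine (strictAntiOn_of_hasDerivAt_neg (convex_Ici 0) hasDerivAt_G fun y hy => ?_)
    |>.lt_of_tendsto_atTop tendsto_G_atTop hx
  rw [interior_Ici] at hy
  linarith [K_pos hy]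

lemma G_neg (x : ℝ) : G (-x) = G x := by
  simp only [G, D, neg_neg, stdNormalPDF_neg]
  ring

lemma G_pos (x : ℝ) : 0 < G x := by
  rcases le_total 0 x with hx | hx
  · exact G_pos_of_nonneg hx
  · simpa [G_neg] using G_pos_of_nonneg (neg_nonneg.mpr hx)

end OptThreshold

/-- The estimated optimal acceptance threshold is strictly decreasing in the
favorability ρ of the environment. -/
theorem optThreshold_strictAnti : StrictAnti optThreshold :=
  strictAnti_of_hasDerivAt_neg OptThreshold.hasDerivAt_optThreshold fun x =>
    div_neg_of_neg_of_pos (neg_neg_of_pos (OptThreshold.G_pos x)) (stdNormalPDF_pos x)
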